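/- arXiv:2403.00916 — 2 statements merged into one kernel-verified Lean document; each statement's English description precedes it below -/
import Mathlib

section
/- In the abstract affects setting (with O not assumed injective), suppose the embedding O satisfies compat with respect to A. If A(X,Y,Z) holds and is Irred₃, then for every e ∈ Z: F̄_s(X ∪ Y) ∩ F̄_s(Z ∖ {e}) ⊆ J⁺(O e). -/
/-- The causal future `J⁺(t) = {t' : t ≤ t'}` of a point in a partially ordered set. -/
def Jplus {T : Type*} [PartialOrder T] (t : T) : Set T := {t' : T | t ≤ t'}

/-- The support future `F̄_s(W) = ⋂_{w ∈ W} J⁺(O w)` of a finite set of random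
variable labels under an embedding `O` (with `F̄_s(∅) = T`). -/
def suppFuture {S T : Type*} [PartialOrder T] (O : S → T) (W : Finset S) : Set T :=
  ⋂ w ∈ W, Jplus (O w)

/-- `X ⊨ Y|do(Z)` is Irred₁ (relative to the set of affects relations `A`) if for
every nonempty strict subset `s_X ⊊ X`, `A s_X Y ((X∖s_X) ∪ Z)` holds. -/
def Irred1 {S : Type*} [DecidableEq S] (A : Finset S → Finset S → Finset S → Prop)
    (X Y Z : Finset S) : Prop :=
  ∀ sX : Finset S, sX ⊆ X → sX.Nonempty → sX ≠ X → A sX Y ((X \ sX) ∪ Z)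

/-- `X ⊨ Y|do(Z)` is Irred₃ (relative to `A`) if for every nonempty `s_Z ⊆ Z`,
`A s_Z Y (X ∪ (Z∖s_Z))` holds or `A s_Z Y (Z∖s_Z)` holds. -/
def Irred3 {S : Type*} [DecidableEq S] (A : Finset S → Finset S → Finset S → Prop)
    (X Y Z : Finset S) : Prop :=
  ∀ sZ : Finset S, sZ ⊆ Z → sZ.Nonempty →
    (A sZ Y (X ∪ (Z \ sZ)) ∨ A sZ Y (Z \ sZ))

/-- The embedding `O` satisfies compat with respect to `A` if for every triple of
pairwise disjoint finite sets with `X, Y` nonempty such that `A X Y Z` holds and is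
Irred₁, one has `F̄_s(Y ∪ Z) ⊆ F̄_s(X)`. -/
def Compat {S T : Type*} [DecidableEq S] [PartialOrder T]
    (A : Finset S → Finset S → Finset S → Prop) (O : S → T) : Prop :=
  ∀ X Y Z : Finset S, Disjoint X Y → Disjoint X Z → Disjoint Y Z →
    X.Nonempty → Y.Nonempty → A X Y Z → Irred1 A X Y Z →
    suppFuture O (Y ∪ Z) ⊆ suppFuture O X

section

variable {S T : Type*} [PartialOrder T]

lemma suppFuture_union [DecidableEq S] (O : S → T) (W₁ W₂ : Finset S) :
    suppFuture O (W₁ ∪ W₂) = suppFuture O W₁ ∩ suppFuture O W₂ := by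
  ext t; simp [suppFuture, or_imp, forall_and]

lemma suppFuture_singleton (O : S → T) (e : S) : suppFuture O {e} = Jplus (O e) := by
  simp [suppFuture]

lemma suppFuture_anti (O : S → T) {W W' : Finset S} (h : W ⊆ W') :
    suppFuture O W' ⊆ suppFuture O W :=
  Set.biInter_subset_biInter_left fun _ hw => h hw

lemma irred1_singleton [DecidableEq S] (A : Finset S → Finset S → Finset S → Prop)
    (e : S) (Y Z : Finset S) : Irred1 A {e} Y Z :=
  fun _ hsub hne hneq => (hneq ((Finset.Nonempty.subset_singleton_iff hne).mp hsub)).elim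

/-- A single cause is automatically Irred₁, so compat applies to every relation `{e} ⊨ Y|do(W)`. -/
lemma Compat.suppFuture_subset_Jplus [DecidableEq S]
    {A : Finset S → Finset S → Finset S → Prop} {O : S → T} (hc : Compat A O)
    {e : S} {Y W : Finset S} (heY : e ∉ Y) (heW : e ∉ W) (hYW : Disjoint Y W)
    (hY : Y.Nonempty) (hA : A {e} Y W) :
    suppFuture O (Y ∪ W) ⊆ Jplus (O e) := by
  rw [← suppFuture_singleton O e]
  exact hc {e} Y W (Finset.disjoint_singleton_left.mpr heY)
    (Finset.disjoint_singleton_left.mpr heW) hYW (Finset.singleton_nonempty e) hY hA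
    (irred1_singleton A e Y W)

end

theorem suppFuture_inter_subset_of_irred3_general {S T : Type*} [DecidableEq S] [PartialOrder T]
    (A : Finset S → Finset S → Finset S → Prop) (O : S → T)
    (hc : Compat A O) (X Y Z : Finset S)
    (hXY : Disjoint X Y) (hXZ : Disjoint X Z) (hYZ : Disjoint Y Z)
    (hY : Y.Nonempty)
    (h3 : Irred3 A X Y Z) :
    ∀ e ∈ Z, suppFuture O (X ∪ Y) ∩ suppFuture O (Z \ {e}) ⊆ Jplus (O e) := by
  intro e he
  have heX : e ∉ X := Finset.disjoint_right.mp hXZ he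
  have heY : e ∉ Y := Finset.disjoint_right.mp hYZ he
  have hYZe : Disjoint Y (Z \ {e}) := hYZ.mono_right Finset.sdiff_subset
  rw [← suppFuture_union]
  rcases h3 {e} (Finset.singleton_subset_iff.mpr he) (Finset.singleton_nonempty e) with h | h
  · refine (suppFuture_anti O ?_).trans
      (hc.suppFuture_subset_Jplus heY (by simp [heX]) ?_ hY h)
    · intro s; simp only [Finset.mem_union]; tauto
    · exact Finset.disjoint_union_right.mpr ⟨hXY.symm, hYZe⟩
  · refine (suppFuture_anti O ?_).trans
      (hc.suppFuture_subset_Jplus heY (by simp) hYZe hY h)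
    exact Finset.union_subset_union_left Finset.subset_union_right

/-- If the embedding `O` satisfies compat with respect to `A`, and `A X Y Z` holds
and is Irred₃, then for every `e ∈ Z`,
`F̄_s(X ∪ Y) ∩ F̄_s(Z ∖ {e}) ⊆ J⁺(O e)`. -/
theorem suppFuture_inter_subset_of_irred3 {S T : Type*} [DecidableEq S] [PartialOrder T]
    (A : Finset S → Finset S → Finset S → Prop) (O : S → T)
    (hc : Compat A O) (X Y Z : Finset S)
    (hXY : Disjoint X Y) (hXZ : Disjoint X Z) (hYZ : Disjoint Y Z)
    (hX : X.Nonempty) (hY : Y.Nonempty)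
    (hA : A X Y Z) (h3 : Irred3 A X Y Z) :
    ∀ e ∈ Z, suppFuture O (X ∪ Y) ∩ suppFuture O (Z \ {e}) ⊆ Jplus (O e) :=
  suppFuture_inter_subset_of_irred3_general A O hc X Y Z hXY hXZ hYZ hY h3
end

section
/- In the abstract affects setting, let T be a conical poset and let O be injective (non-degenerate embedding). If O satisfies compat-atomic with respect to A (that is, for every e ∈ S and disjoint finite Y, Z ⊆ S with Y nonempty and A({e}, Y, Z), one has F̄_s(Y ∪ Z) ⊆ J⁺(O e)), then O satisfies compat: for every triple with A(X,Y,Z) and Irred₁, F̄_s(Y ∪ Z) ⊆ F̄_s(X). -/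
/-- The joint future `f(L) = ⋂_{p ∈ L} J⁺(p)` of a subset of a poset (with `f(∅) = T`). -/
def jointFuture {T : Type*} [PartialOrder T] (L : Set T) : Set T := ⋂ p ∈ L, Jplus p

/-- The spanning set `span(L)`: the union of all subsets `L' ⊆ L` with
`f(L') = f(L)` such that no strict subset `L'' ⊊ L'` satisfies `f(L'') = f(L)`. -/
def spanS {T : Type*} [PartialOrder T] (L : Set T) : Set T :=
  {x : T | ∃ L' : Set T, L' ⊆ L ∧ x ∈ L' ∧ jointFuture L' = jointFuture L ∧
    ∀ L'' : Set T, L'' ⊂ L' → jointFuture L'' ≠ jointFuture L}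

/-- A poset is conical if for all nonempty finite subsets `L₁, L₂`,
`f(L₁) = f(L₂)` implies `span(L₁) = span(L₂)`. -/
def Conical (T : Type*) [PartialOrder T] : Prop :=
  ∀ L₁ L₂ : Set T, L₁.Finite → L₂.Finite → L₁.Nonempty → L₂.Nonempty →
    jointFuture L₁ = jointFuture L₂ → spanS L₁ = spanS L₂

/-- The embedding `O` satisfies compat-atomic with respect to `A` if for every
`e : S` and disjoint finite `Y, Z ⊆ S` with `Y` nonempty such that `A {e} Y Z`
holds, one has `F̄_s(Y ∪ Z) ⊆ J⁺(O e)`. -/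
def CompatAtomic {S T : Type*} [DecidableEq S] [PartialOrder T]
    (A : Finset S → Finset S → Finset S → Prop) (O : S → T) : Prop :=
  ∀ (e : S) (Y Z : Finset S),
    Disjoint ({e} : Finset S) Y → Disjoint ({e} : Finset S) Z → Disjoint Y Z →
    Y.Nonempty → A {e} Y Z →
    suppFuture O (Y ∪ Z) ⊆ Jplus (O e)

/-!
Put `P = O(Y ∪ Z)` and `Q = O(X)`. Irred₁ and compat-atomic show that each point `O e` of `Q`
lies below the joint future of the remaining points of `P ∪ Q`, so deleting it does not change
`f(P ∪ Q)`; conicality then says `O e` is not in `span(P ∪ Q)`. Hence `span(P ∪ Q) ⊆ P`, and since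
a finite set and its span have the same joint future, `f(P) ⊆ f(P ∪ Q) ⊆ f(Q)`.
-/

section JointFuture

variable {T : Type*} [PartialOrder T]

lemma mem_jointFuture {L : Set T} {x : T} : x ∈ jointFuture L ↔ ∀ p ∈ L, p ≤ x := by
  simp [jointFuture, Jplus]

lemma jointFuture_anti {L₁ L₂ : Set T} (h : L₁ ⊆ L₂) : jointFuture L₂ ⊆ jointFuture L₁ :=
  fun _ hx => mem_jointFuture.2 fun p hp => mem_jointFuture.1 hx p (h hp)

lemma suppFuture_eq_jointFuture_image {S : Type*} (O : S → T) (W : Finset S) :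
    suppFuture O W = jointFuture (O '' W) := by
  simp [suppFuture, jointFuture]

lemma spanS_subset (L : Set T) : spanS L ⊆ L :=
  fun _ ⟨_, hL', hx, _⟩ => hL' hx

lemma exists_minimal_subset_jointFuture_eq {L : Set T} (hL : L.Finite) :
    ∃ L' ⊆ L, jointFuture L' = jointFuture L ∧
      ∀ L'' ⊂ L', jointFuture L'' ≠ jointFuture L := by
  have hfin : {L' | L' ⊆ L ∧ jointFuture L' = jointFuture L}.Finite :=
    hL.finite_subsets.subset fun _ h => h.1
  obtain ⟨L', -, ⟨hsub, heq⟩, hmin⟩ := hfin.exists_le_minimal ⟨subset_rfl, rfl⟩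
  refine ⟨L', hsub, heq, fun L'' hss heq'' => hss.2 ?_⟩
  exact hmin ⟨hss.1.trans hsub, heq''⟩ hss.1

lemma jointFuture_spanS {L : Set T} (hL : L.Finite) : jointFuture (spanS L) = jointFuture L := by
  refine subset_antisymm ?_ (jointFuture_anti (spanS_subset L))
  obtain ⟨L', hsub, heq, hmin⟩ := exists_minimal_subset_jointFuture_eq hL
  rw [← heq]
  exact jointFuture_anti fun x hx => ⟨L', hsub, hx, heq, hmin⟩

lemma jointFuture_diff_singleton_eq {L : Set T} {p : T}
    (hp : jointFuture (L \ {p}) ⊆ Jplus p) : jointFuture (L \ {p}) = jointFuture L := by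
  refine subset_antisymm (fun x hx => mem_jointFuture.2 fun q hq => ?_)
    (jointFuture_anti Set.sdiff_subset)
  by_cases hqp : q = p
  · exact hqp ▸ hp hx
  · exact mem_jointFuture.1 hx q ⟨hq, hqp⟩

namespace Conical

lemma notMem_spanS (hT : Conical T) {L : Set T} {p : T} (hL : L.Finite)
    (hne : (L \ {p}).Nonempty) (hp : jointFuture (L \ {p}) ⊆ Jplus p) : p ∉ spanS L := by
  rw [hT L (L \ {p}) hL hL.sdiff (hne.mono Set.sdiff_subset) hne
    (jointFuture_diff_singleton_eq hp).symm]
  exact fun hmem => (spanS_subset _ hmem).2 rfl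

lemma jointFuture_subset_of_forall_redundant (hT : Conical T) {P Q : Set T}
    (hP : P.Finite) (hQ : Q.Finite) (hPne : P.Nonempty)
    (hred : ∀ q ∈ Q, q ∉ P → jointFuture ((P ∪ Q) \ {q}) ⊆ Jplus q) :
    jointFuture P ⊆ jointFuture Q := by
  have hspan : spanS (P ∪ Q) ⊆ P := fun x hx => by
    by_contra hxP
    have hxQ : x ∈ Q := (spanS_subset _ hx).resolve_left hxP
    obtain ⟨y, hy⟩ := hPne
    have hne : ((P ∪ Q) \ {x}).Nonempty :=
      ⟨y, Or.inl hy, fun hyx => hxP (Set.mem_singleton_iff.1 hyx ▸ hy)⟩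
    exact hT.notMem_spanS (hP.union hQ) hne (hred x hxQ hxP) hx
  calc jointFuture P ⊆ jointFuture (spanS (P ∪ Q)) := jointFuture_anti hspan
    _ = jointFuture (P ∪ Q) := jointFuture_spanS (hP.union hQ)
    _ ⊆ jointFuture Q := jointFuture_anti Set.subset_union_right

end Conical

end JointFuture

section Affects

variable {S T : Type*} [DecidableEq S] {A : Finset S → Finset S → Finset S → Prop}

lemma affects_singleton_of_irred1 {X Y Z : Finset S} {e : S} (he : e ∈ X) (hA : A X Y Z)
    (hIrr : Irred1 A X Y Z) : A {e} Y ((X \ {e}) ∪ Z) := by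
  by_cases hX : X = {e}
  · subst hX
    simpa using hA
  · exact hIrr {e} (Finset.singleton_subset_iff.2 he) (Finset.singleton_nonempty e) (Ne.symm hX)

lemma CompatAtomic.suppFuture_subset_of_mem [PartialOrder T] {O : S → T}
    (h : CompatAtomic A O) {X Y Z : Finset S} {e : S} (he : e ∈ X)
    (hXY : Disjoint X Y) (hXZ : Disjoint X Z) (hYZ : Disjoint Y Z) (hYne : Y.Nonempty)
    (hA : A X Y Z) (hIrr : Irred1 A X Y Z) :
    suppFuture O (Y ∪ ((X \ {e}) ∪ Z)) ⊆ Jplus (O e) := by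
  refine h e Y _ (Finset.disjoint_singleton_left.2 (Finset.disjoint_left.1 hXY he))
    (Finset.disjoint_union_right.2
      ⟨Finset.disjoint_sdiff, Finset.disjoint_singleton_left.2 (Finset.disjoint_left.1 hXZ he)⟩)
    (Finset.disjoint_union_right.2 ⟨hXY.symm.mono_right Finset.sdiff_subset, hYZ⟩) hYne
    (affects_singleton_of_irred1 he hA hIrr)

end Affects

/-- In a conical space-time with a non-degenerate (injective) embedding,
compat-atomic implies compat. -/
theorem compatAtomic_implies_compat {S T : Type*} [DecidableEq S] [PartialOrder T]
    (A : Finset S → Finset S → Finset S → Prop) (O : S → T)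
    (hT : Conical T) (hO : Function.Injective O)
    (h : CompatAtomic A O) : Compat A O := by
  intro X Y Z hXY hXZ hYZ _ hYne hA hIrr
  rw [suppFuture_eq_jointFuture_image, suppFuture_eq_jointFuture_image]
  refine hT.jointFuture_subset_of_forall_redundant ((Y ∪ Z).finite_toSet.image O)
    (X.finite_toSet.image O)
    ((Finset.coe_nonempty.2 (hYne.mono Finset.subset_union_left)).image O) ?_
  rintro _ ⟨e, he, rfl⟩ hOe
  have heYZ : e ∉ Y ∪ Z := fun hmem => hOe (Set.mem_image_of_mem O hmem)
  have hrest : (O '' ↑(Y ∪ Z) ∪ O '' ↑X) \ {O e} = O '' ↑(Y ∪ ((X \ {e}) ∪ Z)) := by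
    rw [← Set.image_union, ← Set.image_singleton, ← Set.image_sdiff hO]
    congr 1
    ext x
    simp only [Finset.mem_union, Finset.coe_union, Finset.coe_sdiff, Set.mem_sdiff] at heYZ ⊢
    grind
  rw [hrest, ← suppFuture_eq_jointFuture_image]
  exact h.suppFuture_subset_of_mem he hXY hXZ hYZ hYne hA hIrr
end
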